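/- If a = −π²/2, then every λ ∈ Λ_a satisfies Re(λ) ≤ 0, the purely imaginary numbers iπ and −iπ belong to Λ_a (so v0(a) = 0), and the real number 0 does not belong to Λ_a. -/

import Mathlib

/-!
For `λ ≠ 0` the characteristic equation reads `λ² = a (1 - e^{-λ})`. At `λ = ±iπ` both sides
equal `-π² = 2a`. Conversely, for `-π²/2 ≤ a ≤ 0` a root `λ = x + iy` with `x > 0` would satisfy
`|λ|² ≤ -a (1 + e^{-x}) < π²`, so `|y| < π`. If `y ≠ 0` then `y sin y > 0`, and the imaginary
part `2xy = a e^{-x} sin y`, multiplied by `y`, has a positive left and a nonpositive right side;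
if `y = 0` the real part `x² = a (1 - e^{-x}) ≤ 0` is impossible.
-/

open MeasureTheory Real

/-- The characteristic function `h_a(λ) = λ − a ∫_{−1}^0 e^{λu} du`. -/
noncomputable def charFn (a : ℝ) (lam : ℂ) : ℂ :=
  lam - a * ∫ u in (-1:ℝ)..0, Complex.exp (lam * u)

/-- The set `Λ_a` of complex solutions of the characteristic equation. -/
def charRoots (a : ℝ) : Set ℂ := {lam | charFn a lam = 0}

/-- `v₀(a) = sup{Re λ : λ ∈ Λ_a}`. -/
noncomputable def v0 (a : ℝ) : ℝ := sSup (Complex.re '' charRoots a)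

lemma charFn_zero (a : ℝ) : charFn a 0 = -a := by
  simp [charFn]

lemma zero_mem_charRoots_iff {a : ℝ} : (0 : ℂ) ∈ charRoots a ↔ a = 0 := by
  simp [charRoots, charFn_zero]

lemma charFn_eq_zero_iff {a : ℝ} {lam : ℂ} (h : lam ≠ 0) :
    charFn a lam = 0 ↔ lam ^ 2 = a * (1 - Complex.exp (-lam)) := by
  rw [charFn, integral_exp_mul_complex h, sub_eq_zero, ← mul_div_assoc, eq_div_iff h]
  push_cast
  rw [mul_zero, Complex.exp_zero, mul_neg_one]
  constructor <;> intro hh <;> linear_combination hh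

lemma mem_charRoots_of_exp_neg_eq_neg_one {a : ℝ} {s : ℂ} (hexp : Complex.exp (-s) = -1)
    (hsq : s ^ 2 = 2 * a) : s ∈ charRoots a := by
  have hs : s ≠ 0 := by
    rintro rfl
    norm_num at hexp
  show charFn a s = 0
  rw [charFn_eq_zero_iff hs, hexp, hsq]
  ring

lemma sq_norm_le_of_mem_charRoots {a : ℝ} (ha : a ≤ 0) {lam : ℂ} (hl : lam ∈ charRoots a)
    (h : lam ≠ 0) : ‖lam‖ ^ 2 ≤ -a * (1 + rexp (-lam.re)) := by
  have hnorm : ‖1 - Complex.exp (-lam)‖ ≤ 1 + rexp (-lam.re) := by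
    simpa [Complex.norm_exp] using norm_sub_le (1 : ℂ) (Complex.exp (-lam))
  calc ‖lam‖ ^ 2 = |a| * ‖1 - Complex.exp (-lam)‖ := by
        rw [← norm_pow, (charFn_eq_zero_iff h).mp hl, norm_mul, Complex.norm_real,
          Real.norm_eq_abs]
    _ ≤ -a * (1 + rexp (-lam.re)) := by
        rw [abs_of_nonpos ha]
        exact mul_le_mul_of_nonneg_left hnorm (neg_nonneg.mpr ha)

lemma im_eq_of_mem_charRoots {a : ℝ} {lam : ℂ} (hl : lam ∈ charRoots a) (h : lam ≠ 0) :
    2 * lam.re * lam.im = a * rexp (-lam.re) * Real.sin lam.im := by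
  have him := congrArg Complex.im ((charFn_eq_zero_iff h).mp hl)
  simp [pow_two, Complex.mul_im, Complex.exp_im] at him
  linear_combination him

lemma re_eq_of_mem_charRoots_of_im_eq_zero {a : ℝ} {lam : ℂ} (hl : lam ∈ charRoots a)
    (h : lam ≠ 0) (hy : lam.im = 0) : lam.re ^ 2 = a * (1 - rexp (-lam.re)) := by
  have hre := congrArg Complex.re ((charFn_eq_zero_iff h).mp hl)
  simp [pow_two, Complex.mul_re, Complex.exp_re, hy] at hre
  linear_combination hre

lemma mul_sin_pos_of_abs_lt_pi {y : ℝ} (hy0 : y ≠ 0) (hy : |y| < π) : 0 < y * Real.sin y := by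
  have key : 0 < |y| * Real.sin |y| :=
    mul_pos (abs_pos.mpr hy0) (Real.sin_pos_of_pos_of_lt_pi (abs_pos.mpr hy0) hy)
  rcases abs_cases y with ⟨h, -⟩ | ⟨h, -⟩ <;> rw [h] at key
  · exact key
  · simpa [Real.sin_neg] using key

lemma re_nonpos_of_mem_charRoots {a : ℝ} (ha : -(π ^ 2) / 2 ≤ a) (ha0 : a ≤ 0) {lam : ℂ}
    (hl : lam ∈ charRoots a) : lam.re ≤ 0 := by
  by_contra! hx
  have h : lam ≠ 0 := fun h0 => by simp [h0] at hx
  have hexp : rexp (-lam.re) < 1 := Real.exp_lt_one_iff.mpr (by linarith)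
  have hnorm : lam.re ^ 2 + lam.im ^ 2 < π ^ 2 := by
    have hle := sq_norm_le_of_mem_charRoots ha0 hl h
    rw [Complex.sq_norm, Complex.normSq_apply] at hle
    have hπ : -a * (1 + rexp (-lam.re)) ≤ π ^ 2 / 2 * (1 + rexp (-lam.re)) :=
      mul_le_mul_of_nonneg_right (by linarith) (by positivity)
    nlinarith [mul_lt_mul_of_pos_left hexp (pow_pos Real.pi_pos 2)]
  have him := im_eq_of_mem_charRoots hl h
  by_cases hy : lam.im = 0
  · have hre := re_eq_of_mem_charRoots_of_im_eq_zero hl h hy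
    nlinarith
  · have hy_lt : |lam.im| < π := by
      apply abs_lt_of_sq_lt_sq _ Real.pi_pos.le
      nlinarith
    have hsin := mul_sin_pos_of_abs_lt_pi hy hy_lt
    have hlhs : 0 < 2 * lam.re * lam.im * lam.im := by
      have := mul_pos hx (mul_self_pos.mpr hy)
      linarith
    have hrhs : a * rexp (-lam.re) * Real.sin lam.im * lam.im ≤ 0 := by
      have := mul_nonpos_of_nonpos_of_nonneg ha0 (mul_pos (Real.exp_pos (-lam.re)) hsin).le
      linarith
    rw [him] at hlhs
    linarith

lemma v0_eq_of_mem_of_forall_re_le {a r : ℝ} {lam : ℂ} (hl : lam ∈ charRoots a) (hre : lam.re = r)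
    (hle : ∀ mu ∈ charRoots a, mu.re ≤ r) : v0 a = r :=
  IsGreatest.csSup_eq ⟨⟨lam, hl, hre⟩, by rintro _ ⟨mu, hmu, rfl⟩; exact hle mu hmu⟩

/-- If `a = −π²/2` then every root has nonpositive real part, `±iπ` are roots
(so `v₀(a) = 0`), and `0 ∉ Λ_a`. -/
theorem charRoots_at_critical (a : ℝ) (ha : a = -(π ^ 2) / 2) :
    (∀ lam ∈ charRoots a, lam.re ≤ 0) ∧
    ((π : ℂ) * Complex.I ∈ charRoots a) ∧
    (-((π : ℂ) * Complex.I) ∈ charRoots a) ∧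
    v0 a = 0 ∧
    (0 : ℂ) ∉ charRoots a := by
  have hre : ∀ lam ∈ charRoots a, lam.re ≤ 0 := fun lam =>
    re_nonpos_of_mem_charRoots ha.ge (by rw [ha]; nlinarith [Real.pi_pos])
  have hsq : ((π : ℂ) * Complex.I) ^ 2 = 2 * a := by
    rw [ha]
    push_cast
    linear_combination (π : ℂ) ^ 2 * Complex.I_sq
  have hpos : (π : ℂ) * Complex.I ∈ charRoots a :=
    mem_charRoots_of_exp_neg_eq_neg_one (by simp [Complex.exp_neg, Complex.exp_pi_mul_I]) hsq
  have hneg : -((π : ℂ) * Complex.I) ∈ charRoots a :=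
    mem_charRoots_of_exp_neg_eq_neg_one (by rw [neg_neg, Complex.exp_pi_mul_I])
      (by rw [neg_sq, hsq])
  refine ⟨hre, hpos, hneg, v0_eq_of_mem_of_forall_re_le hpos (by simp) hre, ?_⟩
  rw [zero_mem_charRoots_iff, ha]
  nlinarith [Real.pi_pos]
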